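/- Let a group G act properly by isometries on a proper geodesic metric space (Y,d) with basepoint o, and let h ∈ G be a contracting element. Then: (1) the cyclic subgroup ⟨h⟩ has finite index in E(h); and (2) E(h) = {g ∈ G : there exists an integer n > 0 with g h^n g^{-1} = h^n or g h^n g^{-1} = h^{-n}}. -/

import Mathlib

open Metric Set Filter

/-- A geodesic segment in a metric space, parametrized by arc length on `[0, len]`. -/
structure GeodesicSegment (Y : Type*) [MetricSpace Y] where
  len : ℝ
  len_nonneg : 0 ≤ len
  f : ℝ → Y
  isom : ∀ s ∈ Set.Icc (0 : ℝ) len, ∀ t ∈ Set.Icc (0 : ℝ) len, dist (f s) (f t) = |s - t|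

namespace GeodesicSegment

variable {Y : Type*} [MetricSpace Y]

/-- The initial point of a geodesic segment. -/
def source (γ : GeodesicSegment Y) : Y := γ.f 0

/-- The terminal point of a geodesic segment. -/
def target (γ : GeodesicSegment Y) : Y := γ.f γ.len

/-- The image of a geodesic segment. -/
def image (γ : GeodesicSegment Y) : Set Y := γ.f '' Set.Icc 0 γ.len

end GeodesicSegment

/-- A metric space is geodesic if any two points are joined by a geodesic segment. -/
def GeodesicSpace (Y : Type*) [MetricSpace Y] : Prop :=
  ∀ x y : Y, ∃ γ : GeodesicSegment Y, γ.source = x ∧ γ.target = y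

/-- Nearest-point projection of a point to a subset. -/
def proj {Y : Type*} [MetricSpace Y] (X : Set Y) (y : Y) : Set Y :=
  {x | x ∈ X ∧ dist y x = Metric.infDist y X}

/-- Nearest-point projection of a set to a subset. -/
def projSet {Y : Type*} [MetricSpace Y] (X A : Set Y) : Set Y :=
  ⋃ a ∈ A, proj X a

/-- `X` is `C`-contracting: any geodesic at distance at least `C` from `X`
has projection to `X` of diameter at most `C`. -/
def IsContractingWith {Y : Type*} [MetricSpace Y] (C : ℝ) (X : Set Y) : Prop :=
  ∀ γ : GeodesicSegment Y, (∀ p ∈ γ.image, C ≤ Metric.infDist p X) →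
    Metric.diam (projSet X γ.image) ≤ C

/-- `X` is contracting (with respect to geodesics). -/
def IsContracting {Y : Type*} [MetricSpace Y] (X : Set Y) : Prop :=
  ∃ C : ℝ, 1 ≤ C ∧ IsContractingWith C X

/-- The orbit of the basepoint under the cyclic group generated by `h`. -/
def cyclicOrbit {Y G : Type*} [MetricSpace Y] [Group G] [MulAction G Y]
    (o : Y) (h : G) : Set Y :=
  {y | ∃ n : ℤ, y = h ^ n • o}

/-- `g` is a contracting element for the action with basepoint `o`. -/
def IsContractingElement {Y G : Type*} [MetricSpace Y] [Group G] [MulAction G Y]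
    (o : Y) (g : G) : Prop :=
  ¬ IsOfFinOrder g ∧ IsContracting (cyclicOrbit o g) ∧
    ∃ c : ℝ, 1 ≤ c ∧ ∀ m n : ℤ,
      (|m - n| : ℝ) / c - c ≤ dist (g ^ m • o) (g ^ n • o) ∧
        dist (g ^ m • o) (g ^ n • o) ≤ c * (|m - n| : ℝ) + c

/-- A group is non-elementary if it has no finite-index subgroup isomorphic to `ℤ`
or to the trivial group. -/
def NonElementary (G : Type*) [Group G] : Prop :=
  ¬ ∃ H : Subgroup G, H.index ≠ 0 ∧
    (Nonempty (H ≃* Multiplicative ℤ) ∨ Nonempty (H ≃* PUnit.{1}))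

/-- The critical exponent of a subset `Γ ⊆ G` for the action with basepoint `o`. -/
noncomputable def critExp {Y G : Type*} [MetricSpace Y] [Group G] [MulAction G Y]
    (o : Y) (Γ : Set G) : ℝ :=
  Filter.limsup
    (fun n : ℕ => Real.log ({g ∈ Γ | dist o (g • o) ≤ (n : ℝ)}.ncard) / (n : ℝ))
    Filter.atTop

/-- The concave region `𝒪_M`: elements `g` such that some geodesic between
`B(o,M)` and `B(g·o,M)` has its interior outside the `M`-neighborhood of the orbit. -/
def concaveRegion {Y : Type*} (G : Type*) [MetricSpace Y] [Group G] [MulAction G Y]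
    (o : Y) (M : ℝ) : Set G :=
  {g | ∃ γ : GeodesicSegment Y,
    γ.source ∈ Metric.closedBall o M ∧ γ.target ∈ Metric.closedBall (g • o) M ∧
    ∀ t ∈ Set.Ioo (0 : ℝ) γ.len, M < Metric.infDist (γ.f t) (MulAction.orbit G o)}

/-- Statistically convex-cocompact (SCC) action. -/
def IsSCC {Y : Type*} (G : Type*) [MetricSpace Y] [Group G] [MulAction G Y]
    (o : Y) : Prop :=
  ∃ M : ℝ, 0 < M ∧ critExp o (concaveRegion G o M) < critExp o (Set.univ : Set G)

/-- A geodesic contains no `(ε, f)`-barrier. -/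
def BarrierFree {Y G : Type*} [MetricSpace Y] [Group G] [MulAction G Y]
    (o : Y) (ε : ℝ) (f : G) (γ : GeodesicSegment Y) : Prop :=
  ¬ ∃ h : G, Metric.infDist (h • o) γ.image ≤ ε ∧
      Metric.infDist ((h * f) • o) γ.image ≤ ε

/-- The set `𝒱_{ε,M,f}` of `(ε, M, f)`-barrier-free elements. -/
def barrierFreeSet {Y G : Type*} [MetricSpace Y] [Group G] [MulAction G Y]
    (o : Y) (ε M : ℝ) (f : G) : Set G :=
  {g | ∃ γ : GeodesicSegment Y, γ.source ∈ Metric.closedBall o M ∧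
    γ.target ∈ Metric.closedBall (g • o) M ∧ BarrierFree o ε f γ}

/-- The subgroup-like set `E(h)` of elements commensurating the orbit of `⟨h⟩`. -/
def Egroup {Y G : Type*} [MetricSpace Y] [Group G] [MulAction G Y]
    (o : Y) (h : G) : Set G :=
  {g | ∃ r : ℝ, 0 < r ∧
    (∀ y ∈ (g • ·) '' cyclicOrbit o h, Metric.infDist y (cyclicOrbit o h) ≤ r) ∧
    (∀ y ∈ cyclicOrbit o h, Metric.infDist y ((g • ·) '' cyclicOrbit o h) ≤ r)}

/-- The axis `Ax(h) = E(h)·o` of a contracting element. -/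
def axisSet {Y G : Type*} [MetricSpace Y] [Group G] [MulAction G Y]
    (o : Y) (h : G) : Set Y :=
  (fun g : G => g • o) '' Egroup o h

/-!
If `g ∈ E(h)`, the elements `h^(-φ m) * g * h^m`, with `h^(φ m) • o` near `g • h^m • o`, move `o`
a bounded distance, so properness yields `g * h^k * g⁻¹ = h^q` with `k ≠ 0`. The stable
translation length `ℓ x = lim dist o (x^n • o) / n` is invariant under conjugation, satisfies
`ℓ (x^k) = |k| ℓ x`, and is positive for `h` by the quasi-isometric lower bound; hence `|q| = |k|`.
Conversely such a relation makes `g • ⟨h⟩o` and `⟨h⟩o` coarsely equal.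

For finite index, let `g * h^n * g⁻¹ = h^(±n)`. The `g`-translate of a geodesic from `h^(-nj) • o`
to `h^(nj) • o` ends at `h^(∓nj) • (g • o)`; if it stayed `C`-far from `⟨h⟩o`, contraction would
bound the distance between the projections `h^(∓nj) • π(g • o)`, which is large. So it comes
`C`-close, and quasiconvexity of `⟨h⟩o` gives `v, w` with `dist o ((h^v * g * h^w) • o) ≤ 5C + 1`.
Hence `E(h)` lies in finitely many double cosets `⟨h⟩ f ⟨h⟩`, and each of them is a finite union of
cosets `f' ⟨h⟩` because `f` conjugates a power of `h` to a power of `h`.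
-/

open scoped Pointwise Topology

namespace GeodesicSegment

variable {Y Z : Type*} [MetricSpace Y] [MetricSpace Z] (γ : GeodesicSegment Y)

lemma source_mem_image : γ.source ∈ γ.image := ⟨0, ⟨le_rfl, γ.len_nonneg⟩, rfl⟩

lemma target_mem_image : γ.target ∈ γ.image := ⟨γ.len, ⟨γ.len_nonneg, le_rfl⟩, rfl⟩

lemma dist_source_target : dist γ.source γ.target = γ.len := by
  rw [source, target, γ.isom 0 ⟨le_rfl, γ.len_nonneg⟩ γ.len ⟨γ.len_nonneg, le_rfl⟩, zero_sub,
    abs_neg, abs_of_nonneg γ.len_nonneg]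

lemma continuousOn : ContinuousOn γ.f (Icc 0 γ.len) :=
  (LipschitzOnWith.of_dist_le_mul fun s hs t ht => by
    rw [γ.isom s hs t ht, NNReal.coe_one, one_mul, Real.dist_eq]).continuousOn

lemma isBounded_image : Bornology.IsBounded γ.image :=
  (isCompact_Icc.image_of_continuousOn γ.continuousOn).isBounded

def restrict {a b : ℝ} (ha : 0 ≤ a) (hab : a ≤ b) (hb : b ≤ γ.len) : GeodesicSegment Y where
  len := b - a
  len_nonneg := sub_nonneg.2 hab
  f s := γ.f (a + s)
  isom s hs t ht := by
    rw [γ.isom _ ⟨by linarith [hs.1], by linarith [hs.2]⟩ _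
      ⟨by linarith [ht.1], by linarith [ht.2]⟩, add_sub_add_left_eq_sub]

section restrict

variable {a b : ℝ} (ha : 0 ≤ a) (hab : a ≤ b) (hb : b ≤ γ.len)

@[simp] lemma restrict_len : (γ.restrict ha hab hb).len = b - a := rfl

@[simp] lemma restrict_source : (γ.restrict ha hab hb).source = γ.f a := by
  simp [restrict, source]

@[simp] lemma restrict_target : (γ.restrict ha hab hb).target = γ.f b := by
  simp [restrict, target]

lemma restrict_image : (γ.restrict ha hab hb).image = γ.f '' Icc a b := by
  simp only [image, restrict, ← image_image γ.f (a + ·), image_const_add_Icc, add_zero,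
    add_sub_cancel]

end restrict

def map (φ : Y → Z) (hφ : Isometry φ) : GeodesicSegment Z where
  len := γ.len
  len_nonneg := γ.len_nonneg
  f := φ ∘ γ.f
  isom s hs t ht := by rw [Function.comp_apply, Function.comp_apply, hφ.dist_eq, γ.isom s hs t ht]

variable {φ : Y → Z} (hφ : Isometry φ)

@[simp] lemma map_source : (γ.map φ hφ).source = φ γ.source := rfl

@[simp] lemma map_target : (γ.map φ hφ).target = φ γ.target := rfl

lemma map_image : (γ.map φ hφ).image = φ '' γ.image := (image_image φ γ.f _).symm

end GeodesicSegment

lemma exists_eq_forall_le_of_continuousOn {ψ : ℝ → ℝ} {a b C : ℝ} (hab : a ≤ b)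
    (hψ : ContinuousOn ψ (Icc a b)) (ha : ψ a ≤ C) (hb : C ≤ ψ b) :
    ∃ c ∈ Icc a b, ψ c = C ∧ ∀ s ∈ Icc c b, C ≤ ψ s := by
  set T := Icc a b ∩ ψ ⁻¹' {C}
  have hT : IsClosed T := hψ.preimage_isClosed_of_isClosed isClosed_Icc isClosed_singleton
  have hTne : T.Nonempty := by
    obtain ⟨c, hc, hψc⟩ := intermediate_value_Icc hab hψ ⟨ha, hb⟩
    exact ⟨c, hc, hψc⟩
  have hTbdd : BddAbove T := bddAbove_Icc.mono inter_subset_left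
  obtain ⟨hcI, hψc⟩ := hT.csSup_mem hTne hTbdd
  refine ⟨sSup T, hcI, hψc, fun s hs => le_of_not_gt fun hlt => ?_⟩
  -- a crossing of level `C` after `s` would lie in `T`, beyond its supremum
  obtain ⟨s', hs', hψs'⟩ := intermediate_value_Icc hs.2
    (hψ.mono (Icc_subset_Icc (hcI.1.trans hs.1) le_rfl)) ⟨hlt.le, hb⟩
  have hs'T : s' ≤ sSup T := le_csSup hTbdd ⟨⟨hcI.1.trans (hs.1.trans hs'.1), hs'.2⟩, hψs'⟩
  have hss' : s = s' := le_antisymm hs'.1 (hs'T.trans hs.1)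
  exact hlt.ne (hss' ▸ hψs')

lemma exists_Icc_forall_le_of_continuousOn {ψ : ℝ → ℝ} {a b t C : ℝ}
    (hψ : ContinuousOn ψ (Icc a b)) (ht : t ∈ Icc a b) (ha : ψ a ≤ C) (hb : ψ b ≤ C)
    (hC : C ≤ ψ t) :
    ∃ t₁ ∈ Icc a t, ∃ t₂ ∈ Icc t b, ψ t₁ = C ∧ ψ t₂ = C ∧ ∀ s ∈ Icc t₁ t₂, C ≤ ψ s := by
  obtain ⟨t₁, ht₁, hψt₁, hle₁⟩ := exists_eq_forall_le_of_continuousOn ht.1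
    (hψ.mono (Icc_subset_Icc le_rfl ht.2)) ha hC
  obtain ⟨c, hc, hψc, hle₂⟩ := exists_eq_forall_le_of_continuousOn (ψ := fun s => ψ (-s))
    (neg_le_neg ht.2)
    (hψ.comp continuousOn_neg fun s hs => ⟨by linarith [hs.2, ht.1], by linarith [hs.1]⟩)
    (by simpa using hb) (by simpa using hC)
  refine ⟨t₁, ht₁, -c, ⟨by linarith [hc.2], by linarith [hc.1]⟩, hψt₁, hψc, fun s hs => ?_⟩
  rcases le_total s t with hst | hst
  · exact hle₁ s ⟨hs.1, hst⟩
  · simpa using hle₂ (-s) ⟨by linarith [hs.2], by linarith⟩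

section Contracting

variable {Y : Type*} [MetricSpace Y] {X : Set Y} {C : ℝ}

lemma isBounded_projSet {A : Set Y} (hA : Bornology.IsBounded A) :
    Bornology.IsBounded (projSet X A) := by
  rcases A.eq_empty_or_nonempty with rfl | ⟨a₀, ha₀⟩
  · simp [projSet]
  obtain ⟨R, hR⟩ := hA.subset_closedBall a₀
  refine (isBounded_closedBall (x := a₀) (r := infDist a₀ X + 2 * R)).subset ?_
  simp only [projSet, iUnion_subset_iff]
  intro a ha x hx
  have had : dist a a₀ ≤ R := hR ha
  calc dist x a₀ ≤ dist x a + dist a a₀ := dist_triangle _ _ _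
    _ = infDist a X + dist a a₀ := by rw [dist_comm, hx.2]
    _ ≤ infDist a₀ X + dist a a₀ + dist a a₀ := by gcongr; exact infDist_le_infDist_add_dist
    _ ≤ infDist a₀ X + 2 * R := by linarith

lemma IsContractingWith.dist_le_of_mem_proj (hX : IsContractingWith C X) {γ : GeodesicSegment Y}
    (hγ : ∀ p ∈ γ.image, C ≤ infDist p X) {x x' : Y} (hx : x ∈ proj X γ.source)
    (hx' : x' ∈ proj X γ.target) : dist x x' ≤ C :=
  (dist_le_diam_of_mem (isBounded_projSet γ.isBounded_image)
    (mem_biUnion γ.source_mem_image hx) (mem_biUnion γ.target_mem_image hx')).trans (hX γ hγ)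

lemma exists_mem_proj [ProperSpace Y] (hX : IsClosed X) (hne : X.Nonempty) (y : Y) :
    ∃ x, x ∈ proj X y := by
  obtain ⟨x, hx, hxy⟩ := hX.exists_infDist_eq_dist hne y
  exact ⟨x, hx, hxy.symm⟩

lemma IsContractingWith.len_le [ProperSpace Y] (hX : IsContractingWith C X) (hcl : IsClosed X)
    (hne : X.Nonempty) {γ : GeodesicSegment Y} (hγ : ∀ p ∈ γ.image, C ≤ infDist p X) :
    γ.len ≤ infDist γ.source X + C + infDist γ.target X := by
  obtain ⟨x, hx⟩ := exists_mem_proj hcl hne γ.source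
  obtain ⟨x', hx'⟩ := exists_mem_proj hcl hne γ.target
  calc γ.len = dist γ.source γ.target := γ.dist_source_target.symm
    _ ≤ dist γ.source x + dist x x' + dist x' γ.target := dist_triangle4 _ _ _ _
    _ ≤ infDist γ.source X + C + infDist γ.target X := by
      rw [hx.2, dist_comm x' γ.target, hx'.2]
      linarith [hX.dist_le_of_mem_proj hγ hx hx']

/-- Contracting sets are quasiconvex. -/
lemma IsContractingWith.infDist_le_of_mem_image [ProperSpace Y] (hX : IsContractingWith C X)
    (hC : 0 ≤ C) (hcl : IsClosed X) {γ : GeodesicSegment Y} (hs : γ.source ∈ X)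
    (ht : γ.target ∈ X) {p : Y} (hp : p ∈ γ.image) : infDist p X ≤ 4 * C := by
  obtain ⟨t, htI, rfl⟩ := hp
  set ψ : ℝ → ℝ := fun s => infDist (γ.f s) X
  rcases le_or_gt (ψ t) C with hle | hlt
  · linarith
  have hψ : ContinuousOn ψ (Icc 0 γ.len) :=
    (continuous_infDist_pt X).comp_continuousOn γ.continuousOn
  obtain ⟨t₁, ht₁, t₂, ht₂, hψt₁, hψt₂, hfar⟩ := exists_Icc_forall_le_of_continuousOn hψ htI
    ((infDist_zero_of_mem hs).trans_le hC) ((infDist_zero_of_mem ht).trans_le hC) hlt.le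
  -- the part of `γ` between the last visit to the `C`-neighbourhood before `t` and the first after
  set δ := γ.restrict ht₁.1 (ht₁.2.trans ht₂.1) ht₂.2
  have hδ : ∀ q ∈ δ.image, C ≤ infDist q X := by
    rw [γ.restrict_image]
    rintro _ ⟨s, hs, rfl⟩
    exact hfar s hs
  have hlen := hX.len_le hcl ⟨_, hs⟩ hδ
  simp only [δ, γ.restrict_len, γ.restrict_source, γ.restrict_target] at hlen
  change infDist (γ.f t₁) X = C at hψt₁
  change infDist (γ.f t₂) X = C at hψt₂
  calc ψ t ≤ infDist (γ.f t₁) X + dist (γ.f t) (γ.f t₁) := infDist_le_infDist_add_dist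
    _ = C + (t - t₁) := by
      rw [hψt₁, γ.isom t htI t₁ ⟨ht₁.1, ht₁.2.trans htI.2⟩, abs_of_nonneg (sub_nonneg.2 ht₁.2)]
    _ ≤ 4 * C := by linarith [ht₂.1]

end Contracting

section CyclicOrbit

variable {Y G : Type*} [MetricSpace Y] [Group G] [MulAction G Y] {o : Y} {h : G}

lemma zpow_smul_mem_cyclicOrbit (o : Y) (h : G) (k : ℤ) : h ^ k • o ∈ cyclicOrbit o h := ⟨k, rfl⟩

lemma cyclicOrbit_nonempty (o : Y) (h : G) : (cyclicOrbit o h).Nonempty :=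
  ⟨_, zpow_smul_mem_cyclicOrbit o h 0⟩

lemma zpow_smul_cyclicOrbit (k : ℤ) : h ^ k • cyclicOrbit o h = cyclicOrbit o h := by
  ext y
  constructor
  · rintro ⟨_, ⟨n, rfl⟩, rfl⟩
    exact ⟨k + n, by rw [zpow_add, mul_smul]⟩
  · rintro ⟨n, rfl⟩
    exact ⟨_, zpow_smul_mem_cyclicOrbit o h (n - k), by
      simp only [smul_smul, ← zpow_add, add_sub_cancel]⟩

lemma isClosed_cyclicOrbit (hproper : ∀ r : ℝ, {g : G | dist o (g • o) ≤ r}.Finite) (h : G) :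
    IsClosed (cyclicOrbit o h) := by
  refine isClosed_of_closure_subset fun z hz => ?_
  have hfin : (ball z 1 ∩ cyclicOrbit o h).Finite := by
    refine ((hproper (dist o z + 1)).image (· • o)).subset ?_
    rintro _ ⟨hy, n, rfl⟩
    exact ⟨h ^ n, (dist_triangle o z _).trans (by linarith [mem_ball'.1 hy]), rfl⟩
  have hz' := isOpen_ball.inter_closure ⟨mem_ball_self one_pos, hz⟩
  rw [hfin.isClosed.closure_eq] at hz'
  exact hz'.2

variable [IsIsometricSMul G Y]

lemma infDist_smul_image (g : G) (y : Y) (X : Set Y) :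
    infDist y ((g • ·) '' X) = infDist (g⁻¹ • y) X := by
  conv_lhs => rw [← smul_inv_smul g y]
  exact infDist_image (isometry_smul Y g)

lemma infDist_zpow_smul_cyclicOrbit (k : ℤ) (y : Y) :
    infDist (h ^ k • y) (cyclicOrbit o h) = infDist y (cyclicOrbit o h) := by
  conv_lhs => rw [← zpow_smul_cyclicOrbit k]
  exact infDist_image (isometry_smul Y _)

lemma zpow_smul_mem_proj (k : ℤ) {x y : Y} (hx : x ∈ proj (cyclicOrbit o h) y) :
    h ^ k • x ∈ proj (cyclicOrbit o h) (h ^ k • y) :=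
  ⟨zpow_smul_cyclicOrbit (o := o) (h := h) k ▸ smul_mem_smul_set hx.1, by
    rw [dist_smul, hx.2, infDist_zpow_smul_cyclicOrbit]⟩

end CyclicOrbit

lemma Filter.Tendsto.div_natCast_of_abs_sub_le {u v : ℕ → ℝ} {K ℓ : ℝ}
    (hu : Tendsto (fun n => u n / n) atTop (𝓝 ℓ)) (huv : ∀ n, |u n - v n| ≤ K) :
    Tendsto (fun n => v n / n) atTop (𝓝 ℓ) := by
  have hdiff : Tendsto (fun n : ℕ => (u n - v n) / n) atTop (𝓝 0) :=
    squeeze_zero_norm (fun n => by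
      rw [norm_div, Real.norm_eq_abs, Real.norm_natCast]; gcongr; exact huv n)
      (tendsto_const_div_atTop_nhds_zero_nat K)
  simpa [sub_div] using hu.sub hdiff

section StableLength

variable {Y G : Type*} [MetricSpace Y] [Group G] [MulAction G Y] [IsIsometricSMul G Y]

/-- `limUnder` is a junk value unless the limit exists; Fekete's lemma provides it
(`tendsto_stableLength`). -/
noncomputable def stableLength (o : Y) (g : G) : ℝ :=
  limUnder atTop fun n : ℕ => dist o (g ^ n • o) / n

lemma subadditive_dist_pow_smul (o : Y) (g : G) : Subadditive fun n => dist o (g ^ n • o) :=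
  fun m n => calc
    dist o (g ^ (m + n) • o) ≤ dist o (g ^ m • o) + dist (g ^ m • o) (g ^ (m + n) • o) :=
      dist_triangle _ _ _
    _ = dist o (g ^ m • o) + dist o (g ^ n • o) := by rw [pow_add, mul_smul, dist_smul]

lemma tendsto_stableLength (o : Y) (g : G) :
    Tendsto (fun n : ℕ => dist o (g ^ n • o) / n) atTop (𝓝 (stableLength o g)) := by
  have h := (subadditive_dist_pow_smul o g).tendsto_lim ⟨0, by rintro _ ⟨n, rfl⟩; positivity⟩
  rwa [stableLength, h.limUnder_eq]

lemma stableLength_basepoint (x o : Y) (g : G) : stableLength x g = stableLength o g := by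
  refine tendsto_nhds_unique (tendsto_stableLength x g)
    ((tendsto_stableLength o g).div_natCast_of_abs_sub_le (K := dist o x + dist o x) fun n => ?_)
  rw [← Real.dist_eq]
  exact (dist_dist_dist_le _ _ _ _).trans_eq (by rw [dist_smul])

lemma stableLength_conj (o : Y) (a g : G) : stableLength o (a * g * a⁻¹) = stableLength o g := by
  rw [← stableLength_basepoint (a⁻¹ • o) o g]
  unfold stableLength
  congr 1
  funext n
  rw [conj_pow, mul_smul, mul_smul, ← dist_smul a⁻¹, inv_smul_smul]

lemma stableLength_inv (o : Y) (g : G) : stableLength o g⁻¹ = stableLength o g := by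
  unfold stableLength
  congr 1
  funext n
  rw [inv_pow, ← dist_smul (g ^ n), smul_inv_smul, dist_comm]

lemma stableLength_pow (o : Y) (g : G) (k : ℕ) : stableLength o (g ^ k) = k * stableLength o g := by
  refine tendsto_nhds_unique (tendsto_stableLength o (g ^ k)) ?_
  rcases k.eq_zero_or_pos with rfl | hk
  · simp
  refine (((tendsto_stableLength o g).comp (tendsto_id.nsmul_atTop hk)).const_mul (k : ℝ)).congr
    fun n => ?_
  simp only [Function.comp_apply, id, smul_eq_mul, Nat.cast_mul, ← pow_mul]
  rw [mul_div_assoc', mul_div_mul_left _ _ (Nat.cast_ne_zero.2 hk.ne')]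

lemma stableLength_zpow (o : Y) (g : G) (k : ℤ) :
    stableLength o (g ^ k) = |(k : ℝ)| * stableLength o g := by
  obtain ⟨k, rfl | rfl⟩ := Int.eq_nat_or_neg k <;>
    simp [zpow_neg, stableLength_inv, stableLength_pow]

lemma stableLength_pos {o : Y} {g : G} {c : ℝ} (hc : 0 < c)
    (hg : ∀ n : ℕ, n / c - c ≤ dist o (g ^ n • o)) : 0 < stableLength o g := by
  have hlim : Tendsto (fun n : ℕ => 1 / c - c / n) atTop (𝓝 (1 / c)) := by
    simpa using tendsto_const_nhds.sub (tendsto_const_div_atTop_nhds_zero_nat c)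
  refine (one_div_pos.2 hc).trans_le (le_of_tendsto_of_tendsto hlim (tendsto_stableLength o g) ?_)
  filter_upwards [eventually_gt_atTop 0] with n hn
  rw [le_div_iff₀ (by positivity), sub_mul, one_div_mul_eq_div, div_mul_cancel₀ _ (by positivity)]
  exact hg n

end StableLength

section Cosets

variable {G : Type*} [Group G] {h f : G}

lemma finite_mk_zpow_mul_zpow {k q : ℤ} (hq : q ≠ 0) (hf : SemiconjBy f (h ^ k) (h ^ q)) :
    {x : G ⧸ Subgroup.zpowers h | ∃ v w : ℤ, x = ↑(h ^ v * f * h ^ w)}.Finite := by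
  refine ((finite_Ico 0 (q.natAbs : ℤ)).image
    fun s : ℤ => ((h ^ s * f : G) : G ⧸ Subgroup.zpowers h)).subset ?_
  rintro _ ⟨v, w, rfl⟩
  refine ⟨v % q, ⟨Int.emod_nonneg v hq, Int.emod_lt v hq⟩, QuotientGroup.eq.2 ?_⟩
  have hv : h ^ v * f = h ^ (v % q) * f * (h ^ k) ^ (v / q) := by
    rw [mul_assoc, (hf.zpow_right _).eq, ← mul_assoc, ← zpow_mul, ← zpow_add, add_comm,
      Int.mul_ediv_add_emod]
  rw [hv, mul_assoc _ _ (h ^ w), inv_mul_cancel_left, ← zpow_mul]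
  exact mul_mem (Subgroup.zpow_mem_zpowers h _) (Subgroup.zpow_mem_zpowers h w)

lemma exists_finset_eq_mul_zpow_of_finite {S : Set G}
    (hS : ((↑) '' S : Set (G ⧸ Subgroup.zpowers h)).Finite) :
    ∃ T : Finset G, ∀ g ∈ S, ∃ t ∈ T, ∃ n : ℤ, g = t * h ^ n := by
  classical
  refine ⟨hS.toFinset.image Quotient.out, fun g hg =>
    ⟨_, Finset.mem_image_of_mem _ (hS.mem_toFinset.2 ⟨g, hg, rfl⟩), ?_⟩⟩
  obtain ⟨n, hn⟩ := Subgroup.mem_zpowers_iff.1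
    (QuotientGroup.eq.1 (QuotientGroup.out_eq' (g : G ⧸ Subgroup.zpowers h)))
  exact ⟨n, by rw [hn, mul_inv_cancel_left]⟩

end Cosets

section Egroup

variable {Y G : Type*} [MetricSpace Y] [Group G] [MulAction G Y] [IsIsometricSMul G Y] {o : Y}
  {h g : G}

lemma abs_eq_of_semiconjBy (hτ : 0 < stableLength o h) {k q : ℤ}
    (hg : SemiconjBy g (h ^ k) (h ^ q)) : |q| = |k| := by
  have := congrArg (stableLength o) (mul_inv_eq_iff_eq_mul.2 hg)
  rw [stableLength_conj, stableLength_zpow, stableLength_zpow] at this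
  exact_mod_cast (mul_right_cancel₀ hτ.ne' this).symm

lemma exists_semiconjBy_zpow_of_mem_Egroup
    (hproper : ∀ r : ℝ, {g : G | dist o (g • o) ≤ r}.Finite) (hg : g ∈ Egroup o h) :
    ∃ k q : ℤ, k ≠ 0 ∧ SemiconjBy g (h ^ k) (h ^ q) := by
  obtain ⟨r, -, hr, -⟩ := hg
  have hnear : ∀ m : ℕ, ∃ i : ℤ, dist (g • h ^ (m : ℤ) • o) (h ^ i • o) < r + 1 := fun m => by
    obtain ⟨_, ⟨i, rfl⟩, hi⟩ := (infDist_lt_iff (cyclicOrbit_nonempty o h)).1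
      ((hr _ ⟨_, zpow_smul_mem_cyclicOrbit o h m, rfl⟩).trans_lt (lt_add_one r))
    exact ⟨i, hi⟩
  choose φ hφ using hnear
  -- `F m` moves `o` a bounded distance, so properness forces a coincidence `F a = F b`
  set F : ℕ → G := fun m => h ^ (-φ m) * g * h ^ (m : ℤ)
  have hF : ∀ m, dist o (F m • o) ≤ r + 1 := fun m => by
    simp only [F]
    rw [← dist_smul (h ^ φ m), mul_assoc, mul_smul, zpow_neg, smul_inv_smul, mul_smul, dist_comm]
    exact (hφ m).le
  obtain ⟨a, -, b, -, hab, heq⟩ :=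
    infinite_univ.exists_ne_map_eq_of_mapsTo (fun m _ => hF m) (hproper (r + 1))
  refine ⟨a - b, φ a - φ b, sub_ne_zero.2 (Nat.cast_injective.ne hab), ?_⟩
  calc g * h ^ ((a : ℤ) - b) = h ^ φ a * F a * h ^ (-(b : ℤ)) := by simp only [F]; group
    _ = h ^ φ a * F b * h ^ (-(b : ℤ)) := by rw [heq]
    _ = h ^ (φ a - φ b) * g := by simp only [F]; group

lemma exists_forall_infDist_mul_zpow_smul_le {a : G} {n q : ℤ} (hn : n ≠ 0)
    (ha : SemiconjBy a (h ^ n) (h ^ q)) :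
    ∃ R, ∀ m : ℤ, infDist ((a * h ^ m) • o) (cyclicOrbit o h) ≤ R := by
  obtain ⟨R, hR⟩ := ((finite_Ico 0 (n.natAbs : ℤ)).image
    fun r => infDist ((a * h ^ r) • o) (cyclicOrbit o h)).bddAbove
  refine ⟨R, fun m => ?_⟩
  have hm : a * h ^ m = h ^ (q * (m / n)) * (a * h ^ (m % n)) := by
    rw [zpow_mul, ← mul_assoc, ← (ha.zpow_right _).eq, mul_assoc, ← zpow_mul, ← zpow_add,
      Int.mul_ediv_add_emod]
  rw [hm, mul_smul, infDist_zpow_smul_cyclicOrbit]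
  exact hR ⟨m % n, ⟨Int.emod_nonneg m hn, Int.emod_lt m hn⟩, rfl⟩

lemma mem_Egroup_of_semiconjBy {n q : ℤ} (hn : n ≠ 0) (hq : q ≠ 0)
    (hg : SemiconjBy g (h ^ n) (h ^ q)) : g ∈ Egroup o h := by
  obtain ⟨R₁, hR₁⟩ := exists_forall_infDist_mul_zpow_smul_le (o := o) hn hg
  obtain ⟨R₂, hR₂⟩ := exists_forall_infDist_mul_zpow_smul_le (o := o) hq hg.inv_symm_left
  refine ⟨max (max R₁ R₂) 1, by positivity, ?_, ?_⟩
  · rintro _ ⟨_, ⟨m, rfl⟩, rfl⟩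
    dsimp only
    rw [smul_smul]
    exact (hR₁ m).trans (le_max_of_le_left (le_max_left _ _))
  · rintro _ ⟨m, rfl⟩
    rw [infDist_smul_image, ← mul_smul]
    exact (hR₂ m).trans (le_max_of_le_left (le_max_right _ _))

lemma Egroup_eq_setOf (hproper : ∀ r : ℝ, {g : G | dist o (g • o) ≤ r}.Finite)
    (hτ : 0 < stableLength o h) :
    Egroup o h = {g : G | ∃ n : ℤ, 0 < n ∧
      (g * h ^ n * g⁻¹ = h ^ n ∨ g * h ^ n * g⁻¹ = h ^ (-n))} := by
  ext g
  constructor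
  · intro hg
    obtain ⟨k, q, hk, hgkq⟩ := exists_semiconjBy_zpow_of_mem_Egroup hproper hg
    have hqk := abs_eq_abs.1 (abs_eq_of_semiconjBy hτ hgkq)
    obtain ⟨n, r, hn, hr, hgnr⟩ : ∃ n r : ℤ, 0 < n ∧ (r = n ∨ r = -n) ∧
        SemiconjBy g (h ^ n) (h ^ r) := by
      rcases hk.lt_or_gt with hneg | hpos
      · exact ⟨-k, -q, by omega, by omega, by simpa only [zpow_neg] using hgkq.inv_right⟩
      · exact ⟨k, q, hpos, hqk, hgkq⟩
    refine ⟨n, hn, ?_⟩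
    rcases hr with rfl | rfl
    exacts [.inl (mul_inv_eq_iff_eq_mul.2 hgnr), .inr (mul_inv_eq_iff_eq_mul.2 hgnr)]
  · rintro ⟨n, hn, hgn | hgn⟩
    · exact mem_Egroup_of_semiconjBy hn.ne' hn.ne' (mul_inv_eq_iff_eq_mul.1 hgn)
    · exact mem_Egroup_of_semiconjBy hn.ne' (neg_ne_zero.2 hn.ne') (mul_inv_eq_iff_eq_mul.1 hgn)

end Egroup

section FiniteIndex

variable {Y G : Type*} [MetricSpace Y] [ProperSpace Y] [Group G] [MulAction G Y]
  [IsIsometricSMul G Y] {o : Y} {h g : G} {C c : ℝ}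

lemma exists_infDist_lt_of_endpoints_zpow_smul (hX : IsContractingWith C (cyclicOrbit o h))
    (hcl : IsClosed (cyclicOrbit o h))
    (hlow : ∀ m n : ℤ, (|m - n| : ℝ) / c - c ≤ dist (h ^ m • o) (h ^ n • o))
    {γ : GeodesicSegment Y} {y : Y} {k : ℤ} (hs : γ.source = h ^ (-k) • y)
    (ht : γ.target = h ^ k • y) (hk : C < 2 * |(k : ℝ)| / c - c) :
    ∃ p ∈ γ.image, infDist p (cyclicOrbit o h) < C := by
  by_contra! hfar
  obtain ⟨x, hx⟩ := exists_mem_proj hcl (cyclicOrbit_nonempty o h) y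
  obtain ⟨σ, rfl⟩ := hx.1
  have hC := hX.dist_le_of_mem_proj hfar (hs ▸ zpow_smul_mem_proj (-k) hx)
    (ht ▸ zpow_smul_mem_proj k hx)
  rw [smul_smul, smul_smul, ← zpow_add, ← zpow_add] at hC
  have hlow' := hlow (-k + σ) (k + σ)
  rw [show |((-k + σ : ℤ) : ℝ) - ((k + σ : ℤ) : ℝ)| = 2 * |(k : ℝ)| by
    push_cast
    rw [show -(k : ℝ) + σ - (k + σ) = -(2 * k) by ring, abs_neg, abs_mul, abs_two]] at hlow'
  linarith

lemma exists_dist_zpow_mul_zpow_smul_le (hgeo : GeodesicSpace Y) (hC : 0 ≤ C) (hc : 0 < c)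
    (hX : IsContractingWith C (cyclicOrbit o h)) (hcl : IsClosed (cyclicOrbit o h))
    (hlow : ∀ m n : ℤ, (|m - n| : ℝ) / c - c ≤ dist (h ^ m • o) (h ^ n • o))
    {n q : ℤ} (hq : q ≠ 0) (hg : SemiconjBy g (h ^ n) (h ^ q)) :
    ∃ v w : ℤ, dist o ((h ^ v * g * h ^ w) • o) ≤ 5 * C + 1 := by
  obtain ⟨j, hj⟩ := exists_nat_gt (c * (C + c))
  have hj' : C < 2 * |((q * j : ℤ) : ℝ)| / c - c := by
    have hqj : (j : ℝ) ≤ |((q * j : ℤ) : ℝ)| := by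
      push_cast
      rw [abs_mul, Nat.abs_cast]
      exact le_mul_of_one_le_left (Nat.cast_nonneg j) (by exact_mod_cast Int.one_le_abs hq)
    rw [lt_sub_iff_add_lt, lt_div_iff₀ hc]
    nlinarith
  obtain ⟨γ, hγs, hγt⟩ := hgeo (h ^ (-(n * j)) • o) (h ^ (n * j) • o)
  -- `g` maps the endpoints of `γ` to `h^(∓qj) • (g • o)`, so by contraction `g • γ` comes near
  -- the orbit
  have hgsmul : ∀ i : ℤ, g • h ^ (n * i) • o = h ^ (q * i) • g • o := fun i => by
    rw [smul_smul, smul_smul, zpow_mul, zpow_mul, (hg.zpow_right i).eq]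
  obtain ⟨_, hp, hpC⟩ := exists_infDist_lt_of_endpoints_zpow_smul hX hcl hlow
    (γ := γ.map _ (isometry_smul Y g)) (y := g • o)
    (by rw [γ.map_source, hγs, ← mul_neg, hgsmul, mul_neg]) (by rw [γ.map_target, hγt, hgsmul]) hj'
  rw [γ.map_image] at hp
  obtain ⟨p, hp, rfl⟩ := hp
  have h4C := hX.infDist_le_of_mem_image hC hcl (hγs ▸ zpow_smul_mem_cyclicOrbit o h _)
    (hγt ▸ zpow_smul_mem_cyclicOrbit o h _) hp
  obtain ⟨_, ⟨v, rfl⟩, hv⟩ := (infDist_lt_iff (cyclicOrbit_nonempty o h)).1 hpC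
  obtain ⟨_, ⟨w, rfl⟩, hw⟩ :=
    (infDist_lt_iff (cyclicOrbit_nonempty o h)).1 (h4C.trans_lt (lt_add_one _))
  refine ⟨-v, w, ?_⟩
  calc dist o ((h ^ (-v) * g * h ^ w) • o) = dist (h ^ v • o) (g • h ^ w • o) := by
        rw [← dist_smul (h ^ v) o, mul_assoc, mul_smul, zpow_neg, smul_inv_smul, mul_smul]
    _ ≤ dist (h ^ v • o) (g • p) + dist (g • p) (g • h ^ w • o) := dist_triangle _ _ _
    _ ≤ 5 * C + 1 := by rw [dist_smul, dist_comm]; linarith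

lemma finite_mk_Egroup (hgeo : GeodesicSpace Y)
    (hproper : ∀ r : ℝ, {g : G | dist o (g • o) ≤ r}.Finite) (hC : 0 ≤ C) (hc : 0 < c)
    (hX : IsContractingWith C (cyclicOrbit o h))
    (hlow : ∀ m n : ℤ, (|m - n| : ℝ) / c - c ≤ dist (h ^ m • o) (h ^ n • o))
    (hτ : 0 < stableLength o h) :
    ((↑) '' Egroup o h : Set (G ⧸ Subgroup.zpowers h)).Finite := by
  -- every `g ∈ E(h)` lies in a double coset `⟨h⟩ f ⟨h⟩` with `f` in a fixed finite set
  set B := {f : G | dist o (f • o) ≤ 5 * C + 1 ∧ ∃ k q : ℤ, q ≠ 0 ∧ SemiconjBy f (h ^ k) (h ^ q)}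
  have hB : B.Finite := (hproper (5 * C + 1)).subset fun f hf => hf.1
  refine (hB.biUnion (t := fun f => {x : G ⧸ Subgroup.zpowers h | ∃ v w : ℤ,
    x = ↑(h ^ v * f * h ^ w)}) fun f hf => ?_).subset ?_
  · obtain ⟨-, k, q, hq, hf⟩ := hf
    exact finite_mk_zpow_mul_zpow hq hf
  rintro _ ⟨g, hg, rfl⟩
  obtain ⟨k, q, hk, hgkq⟩ := exists_semiconjBy_zpow_of_mem_Egroup hproper hg
  have hq : q ≠ 0 := abs_ne_zero.1 ((abs_eq_of_semiconjBy hτ hgkq).trans_ne (abs_ne_zero.2 hk))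
  obtain ⟨v, w, hvw⟩ := exists_dist_zpow_mul_zpow_smul_le hgeo hC hc hX
    (isClosed_cyclicOrbit hproper h) hlow hq hgkq
  have hf : SemiconjBy (h ^ v * g * h ^ w) (h ^ k) (h ^ q) :=
    ((Commute.zpow_zpow_self h v q).semiconjBy.mul_left hgkq).mul_left
      (Commute.zpow_zpow_self h w k)
  refine mem_biUnion (x := h ^ v * g * h ^ w) ⟨hvw, k, q, hq, hf⟩ ⟨-v, -w, ?_⟩
  group

end FiniteIndex

/-- structure of `E(h)` for a contracting element `h`. -/
theorem Egroup_structure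
    {Y G : Type*} [MetricSpace Y] [ProperSpace Y] [Group G] [MulAction G Y]
    (hgeo : GeodesicSpace Y)
    (hiso : ∀ g : G, Isometry (fun y : Y => g • y))
    (o : Y)
    (hproper : ∀ r : ℝ, {g : G | dist o (g • o) ≤ r}.Finite)
    (h : G) (hc : IsContractingElement o h) :
    (∃ T : Finset G, ∀ g ∈ Egroup o h, ∃ t ∈ T, ∃ n : ℤ, g = t * h ^ n) ∧
      Egroup o h = {g : G | ∃ n : ℤ, 0 < n ∧
        (g * h ^ n * g⁻¹ = h ^ n ∨ g * h ^ n * g⁻¹ = h ^ (-n))} := by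
  have : IsIsometricSMul G Y := ⟨hiso⟩
  obtain ⟨-, ⟨C, hC, hX⟩, c, hc, hqi⟩ := hc
  have hlow : ∀ m n : ℤ, (|m - n| : ℝ) / c - c ≤ dist (h ^ m • o) (h ^ n • o) :=
    fun m n => (hqi m n).1
  have hτ : 0 < stableLength o h :=
    stableLength_pos (c := c) (by positivity) fun n => by simpa [dist_comm] using hlow n 0
  exact ⟨exists_finset_eq_mul_zpow_of_finite
    (finite_mk_Egroup hgeo hproper (by positivity) (by positivity) hX hlow hτ),
    Egroup_eq_setOf hproper hτ⟩
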